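/- Let s'_0 be the unique assignment using the new values, assigning the fresh value v_new to each variable V whose domain was extended with v_new not appearing in S. With the constraint revision that adds, for every such extended variable V, the constraint V = v_new → ⋀_{V'≠V} (V' = s'_0[V']), and replaces each C_i by C_i ∨ ⋀_{V} (V = s'_0[V]), a total assignment s (over the extended domains) satisfies all resulting constraints if and only if s ∈ S ∪ {s'_0}. -/
import Mathlib


/-- constraint revision with domain extension by fresh values. -/
theorem constraint_weakening_with_new_values {ι α : Type*} {k : ℕ}
    (C : Fin k → (ι → α) → Prop)
    (DomOld : ι → Set α) (E : Set ι) (vnew : ι → α)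
    (hfresh : ∀ V ∈ E, vnew V ∉ DomOld V)
    (S : Set (ι → α))
    (hS : S = {s | (∀ V, s V ∈ DomOld V) ∧ ∀ i, C i s})
    (s₀' : ι → α) (hs₀' : ∀ V ∈ E, s₀' V = vnew V)
    (s : ι → α)
    (hs : ∀ V, s V ∈ DomOld V ∨ (V ∈ E ∧ s V = vnew V)) :
    ((∀ i, C i s ∨ ∀ V, s V = s₀' V) ∧
      (∀ V ∈ E, s V = vnew V → ∀ V' ≠ V, s V' = s₀' V')) ↔
      s ∈ S ∪ {s₀'} := by
  subst hS
  constructor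
  · rintro ⟨h1, h2⟩
    by_cases hex : ∃ V ∈ E, s V = vnew V
    · obtain ⟨V, hVE, hVv⟩ := hex
      right
      funext V'
      by_cases hne : V' = V
      · subst hne; rw [hVv, hs₀' V' hVE]
      · exact h2 V hVE hVv V' hne
    · push_neg at hex
      have hdom : ∀ V, s V ∈ DomOld V := by
        intro V
        rcases hs V with h | ⟨hVE, hVv⟩
        · exact h
        · exact absurd hVv (hex V hVE)
      by_cases hC : ∀ i, C i s
      · exact Or.inl ⟨hdom, hC⟩
      · push_neg at hC
        obtain ⟨i, hi⟩ := hC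
        rcases h1 i with h | h
        · exact absurd h hi
        · right; exact funext h
  · rintro (⟨hdom, hC⟩ | heq)
    · refine ⟨fun i => Or.inl (hC i), fun V hVE hVv => ?_⟩
      exact absurd (hVv ▸ hdom V) (hfresh V hVE)
    · have : s = s₀' := heq
      subst this
      exact ⟨fun i => Or.inr fun V => rfl, fun V hVE hVv V' _ => rfl⟩
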